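/- arXiv:1410.5008 — 2 statements merged into one kernel-verified Lean document; each statement's English description precedes it below -/
import Mathlib

section
/- The reduction-mod-H homomorphism φ: G_{k+l}(G,H) → G_{k+l}(G/H,1) induces a bijection between the coset spaces G_{k+l}(G,H)/(G_k(G,H) × G_l(G,H)) and G_{k+l}(G/H,1)/(G_k(G/H,1) × G_l(G/H,1)). -/
open SemidirectProduct

/-- The action of permutations of `ι` on `ι → G` by permuting coordinates. -/
def permAut (ι G : Type*) [Group G] : Equiv.Perm ι →* MulAut (ι → G) where
  toFun σ := { Equiv.arrowCongr σ (Equiv.refl G) with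
               map_mul' := fun f g => rfl }
  map_one' := by ext f i; rfl
  map_mul' σ τ := by ext f i; rfl

/-- The wreath product `S_ι[G]`, a model for the group of monomial matrices
with rows/columns indexed by `ι` and nonzero entries in `G`. -/
abbrev Wreath (ι G : Type*) [Group G] := (ι → G) ⋊[permAut ι G] Equiv.Perm ι

@[simp] lemma permAut_apply {ι G : Type*} [Group G] (σ : Equiv.Perm ι) (f : ι → G) (i : ι) :
    permAut ι G σ f i = f (σ.symm i) := rfl

/-- The product of the nonzero entries of a monomial matrix. -/
def entryProdFun {ι G : Type*} [Fintype ι] [CommGroup G] (w : Wreath ι G) : G :=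
  ∏ i, w.left i

/-- The entry-product map as a monoid hom. -/
def entryProd (ι G : Type*) [Fintype ι] [CommGroup G] : Wreath ι G →* G where
  toFun := entryProdFun
  map_one' := by simp [entryProdFun]
  map_mul' a b := by
    simp only [entryProdFun, mul_left, Pi.mul_apply, Finset.prod_mul_distrib]
    congr 1
    exact Equiv.prod_comp a.right.symm fun i => b.left i

/-- `G_n(G, H)`: the subgroup of the wreath product consisting of monomial
matrices whose entries multiply to an element of `H`. -/
def GnSubgroup (n : ℕ) (G : Type*) [CommGroup G] (H : Subgroup G) :
    Subgroup (Wreath (Fin n) G) :=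
  Subgroup.comap (entryProd (Fin n) G) H

lemma mem_GnSubgroup {n : ℕ} {G : Type*} [CommGroup G] {H : Subgroup G}
    (w : Wreath (Fin n) G) : w ∈ GnSubgroup n G H ↔ (∏ i, w.left i) ∈ H := Iff.rfl

/-- The diagonal embedding of `H^n` into the wreath product. -/
def diagW {n : ℕ} {G : Type*} [CommGroup G] (H : Subgroup G) :
    (Fin n → ↥H) →* Wreath (Fin n) G :=
  SemidirectProduct.inl.comp
    (Pi.monoidHom fun i => H.subtype.comp (Pi.evalMonoidHom (fun _ => ↥H) i))

@[simp] lemma diagW_left {n : ℕ} {G : Type*} [CommGroup G] {H : Subgroup G}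
    (h : Fin n → ↥H) (i : Fin n) : (diagW H h).left i = (h i : G) := rfl

@[simp] lemma diagW_right {n : ℕ} {G : Type*} [CommGroup G] {H : Subgroup G}
    (h : Fin n → ↥H) : (diagW H h).right = 1 := rfl

lemma diagW_mem {n : ℕ} {G : Type*} [CommGroup G] (H : Subgroup G) (h : Fin n → ↥H) :
    diagW H h ∈ GnSubgroup n G H := by
  simp only [mem_GnSubgroup, diagW_left]
  exact_mod_cast (Submonoid.prod_mem H.toSubmonoid (fun i _ => (h i).2))

/-- The diagonal embedding of `H^n` into `G_n(G,H)`. -/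
def diagGn {n : ℕ} {G : Type*} [CommGroup G] (H : Subgroup G) :
    (Fin n → ↥H) →* ↥(GnSubgroup n G H) :=
  (diagW H).codRestrict _ (diagW_mem H)

/-- Entrywise reduction mod `H`, as a map of wreath products. -/
def reduceW (n : ℕ) (G : Type*) [CommGroup G] (H : Subgroup G) :
    Wreath (Fin n) G →* Wreath (Fin n) (G ⧸ H) :=
  SemidirectProduct.map
    (Pi.monoidHom fun i => (QuotientGroup.mk' H).comp (Pi.evalMonoidHom (fun _ => G) i))
    (MonoidHom.id _)
    (fun σ => by ext f i; rfl)

lemma reduceW_mem {n : ℕ} {G : Type*} [CommGroup G] (H : Subgroup G)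
    (w : ↥(GnSubgroup n G H)) : reduceW n G H w.1 ∈ GnSubgroup n (G ⧸ H) ⊥ := by
  have hw := w.2
  simp only [mem_GnSubgroup] at hw ⊢
  have : (∏ i, (reduceW n G H w.1).left i) = QuotientGroup.mk' H (∏ i, w.1.left i) := by
    rw [map_prod]; rfl
  rw [this, Subgroup.mem_bot]
  rw [QuotientGroup.mk'_apply, QuotientGroup.eq_one_iff]
  exact hw

/-- The reduction-mod-`H` homomorphism `φ : G_n(G,H) → G_n(G/H, 1)`. -/
def phiGn (n : ℕ) (G : Type*) [CommGroup G] (H : Subgroup G) :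
    ↥(GnSubgroup n G H) →* ↥(GnSubgroup n (G ⧸ H) ⊥) :=
  ((reduceW n G H).comp (GnSubgroup n G H).subtype).codRestrict _ (reduceW_mem H)

/-- The character `l^{⊗n}` of `H^n` associated to a character `l` of `H`. -/
def tensorChar {n : ℕ} {G : Type*} [CommGroup G] {H : Subgroup G}
    (l : ↥H →* ℂˣ) : (Fin n → ↥H) →* ℂˣ :=
  { toFun := fun h => ∏ i, l (h i)
    map_one' := by simp
    map_mul' := fun h h' => by simp [Finset.prod_mul_distrib] }

/-- The `l^{⊗n}`-isotypic component of the restriction to the diagonal `H^n` of a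
representation `ρ` of `G_n(G,H)`: the simultaneous eigenspace on which each
`diagGn H h` acts by the scalar `l^{⊗n}(h)`. -/
def isotypic {n : ℕ} {G : Type*} [CommGroup G] {H : Subgroup G}
    (l : ↥H →* ℂˣ) {V : Type*} [AddCommGroup V] [Module ℂ V]
    (ρ : Representation ℂ ↥(GnSubgroup n G H) V) : Submodule ℂ V :=
  ⨅ h : Fin n → ↥H, Module.End.eigenspace (ρ (diagGn H h)) ((tensorChar l h : ℂˣ) : ℂ)

/-- Irreducibility of a representation. -/
def IsIrred {k : Type*} [Field k] {Γ : Type*} [Group Γ] {V : Type*}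
    [AddCommGroup V] [Module k V] (ρ : Representation k Γ V) : Prop :=
  (∃ v : V, v ≠ 0) ∧
  ∀ W : Submodule k V, (∀ g : Γ, ∀ v ∈ W, ρ g v ∈ W) → W = ⊥ ∨ W = ⊤

/-- Equivalence (isomorphism) of representations. -/
def EquivRep {k : Type*} [Field k] {Γ : Type*} [Group Γ]
    {V V' : Type*} [AddCommGroup V] [Module k V] [AddCommGroup V'] [Module k V']
    (ρ : Representation k Γ V) (σ : Representation k Γ V') : Prop :=
  ∃ e : V ≃ₗ[k] V', ∀ (g : Γ) (v : V), e (ρ g v) = σ g (e v)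

/-- Twisting a representation by a one-dimensional character. -/
def smulRep {Γ : Type*} [Group Γ] {V : Type*} [AddCommGroup V] [Module ℂ V]
    (χ : Γ →* ℂˣ) (ρ : Representation ℂ Γ V) : Representation ℂ Γ V where
  toFun g := ((χ g : ℂ)) • ρ g
  map_one' := by simp
  map_mul' g g' := by
    ext v
    simp only [map_mul, LinearMap.smul_apply, Module.End.mul_apply, Units.val_mul,
      LinearMap.map_smul_of_tower, smul_smul, mul_comm]


/-- The complex reflection group `G(m,p,n)`: monomial matrices whose nonzero
entries are `m`-th roots of unity and whose entry product is an `m/p`-th root of unity. -/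
def Gmpn (m p n : ℕ) : Subgroup (Wreath (Fin n) ℂˣ) where
  carrier := {w | (∀ i, w.left i ^ m = 1) ∧ (∏ i, w.left i) ^ (m / p) = 1}
  one_mem' := by simp
  mul_mem' := by
    rintro a b ⟨ha1, ha2⟩ ⟨hb1, hb2⟩
    constructor
    · intro i
      simp only [mul_left, Pi.mul_apply, permAut_apply, mul_pow, ha1, hb1, one_mul]
    · have : (∏ i, (a * b).left i) = (∏ i, a.left i) * ∏ i, b.left i :=
        map_mul (entryProd (Fin n) ℂˣ) a b
      rw [this, mul_pow, ha2, hb2, one_mul]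
  inv_mem' := by
    rintro a ⟨ha1, ha2⟩
    constructor
    · intro i
      have : a⁻¹.left i = (a.left (a.right i))⁻¹ := by
        rw [SemidirectProduct.inv_left]; rfl
      rw [this, inv_pow, ha1, inv_one]
    · have : (∏ i, a⁻¹.left i) = (∏ i, a.left i)⁻¹ := map_inv (entryProd (Fin n) ℂˣ) a
      rw [this, inv_pow, ha2, inv_one]


lemma permCongr_perm_symm {α β : Type*} (e : α ≃ β) (p : Equiv.Perm α) :
    (e.permCongr p).symm = e.permCongr p.symm := by
  ext x; simp [Equiv.permCongr_def]

/-- The block-diagonal placement of a pair of monomial matrices. -/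
def blockDiagFun {G : Type*} [Group G] {k l : ℕ}
    (a : Wreath (Fin k) G) (b : Wreath (Fin l) G) : Wreath (Fin (k + l)) G :=
  ⟨fun i => Sum.elim a.left b.left (finSumFinEquiv.symm i),
   finSumFinEquiv.permCongr (Equiv.sumCongr a.right b.right)⟩

/-- The block-diagonal embedding as a group homomorphism on full wreath products. -/
def blockDiagHom (G : Type*) [Group G] (k l : ℕ) :
    Wreath (Fin k) G × Wreath (Fin l) G →* Wreath (Fin (k + l)) G where
  toFun p := blockDiagFun p.1 p.2
  map_one' := by
    apply SemidirectProduct.ext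
    · funext i
      rcases h : finSumFinEquiv.symm i with x | x <;>
        simp [blockDiagFun, h]
    · ext i
      simp [blockDiagFun, Equiv.permCongr]
  map_mul' p q := by
    apply SemidirectProduct.ext
    · funext i
      rcases h : finSumFinEquiv.symm i with x | x <;>
        simp [blockDiagFun, h, mul_left, permAut_apply, permCongr_perm_symm,
          Equiv.permCongr_apply, Equiv.symm_apply_apply, Equiv.sumCongr_symm,
          Equiv.sumCongr_apply, Sum.map]
    · ext i
      rcases h : finSumFinEquiv.symm i with x | x <;>
        simp [blockDiagFun, h, mul_right, Equiv.permCongr_apply, Equiv.symm_apply_apply,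
          Equiv.sumCongr_apply, Sum.map, permCongr_perm_symm]


open scoped Classical in
/-- The block subgroup `G_λ = ∏_j G_{λ_j}(G,H)` of block-diagonal monomial matrices,
where the blocks are the fibers of `bl : Fin n → ι` (so `λ_j` is the size of the
fiber over `j`): permutations must preserve each block, and the product of the
entries in each block must lie in `H`. -/
def blockSubgroupH {n : ℕ} {G : Type*} [CommGroup G] (H : Subgroup G)
    {ι : Type*} (bl : Fin n → ι) : Subgroup (Wreath (Fin n) G) where
  carrier := {w | (∀ i, bl (w.right i) = bl i) ∧
    ∀ j : ι, (∏ i, if bl i = j then w.left i else 1) ∈ H}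
  one_mem' := by
    refine ⟨fun i => rfl, fun j => ?_⟩
    simpa using H.one_mem
  mul_mem' := by
    rintro a b ⟨ha1, ha2⟩ ⟨hb1, hb2⟩
    have hperm : ∀ i, bl (a.right i) = bl i := ha1
    refine ⟨fun i => ?_, fun j => ?_⟩
    · have : (a * b).right i = a.right (b.right i) := rfl
      rw [this, ha1, hb1]
    · have hsplit : (∏ i, if bl i = j then (a * b).left i else 1)
          = (∏ i, if bl i = j then a.left i else 1) *
            ∏ i, if bl i = j then b.left (a.right.symm i) else 1 := by
        rw [← Finset.prod_mul_distrib]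
        refine Finset.prod_congr rfl fun i _ => ?_
        by_cases h : bl i = j <;>
          simp [h, mul_left, permAut_apply]
      have hre : (∏ i, if bl i = j then b.left (a.right.symm i) else 1)
          = ∏ i, if bl i = j then b.left i else 1 := by
        refine Fintype.prod_equiv a.right.symm _ _ fun i => ?_
        have : bl (a.right.symm i) = bl i := by
          conv_rhs => rw [← a.right.apply_symm_apply i, ha1]
        rw [this]
      rw [hsplit, hre]
      exact H.mul_mem (ha2 j) (hb2 j)
  inv_mem' := by
    rintro a ⟨ha1, ha2⟩
    have hsymm : ∀ i, bl (a.right.symm i) = bl i := fun i => by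
      conv_rhs => rw [← a.right.apply_symm_apply i, ha1]
    refine ⟨fun i => ?_, fun j => ?_⟩
    · have : a⁻¹.right i = a.right.symm i := rfl
      rw [this, hsymm]
    · have hinv : ∀ i, a⁻¹.left i = (a.left (a.right i))⁻¹ := fun i => by
        rw [SemidirectProduct.inv_left]; rfl
      have : (∏ i, if bl i = j then a⁻¹.left i else 1)
          = (∏ i, if bl i = j then a.left i else 1)⁻¹ := by
        rw [← Finset.prod_inv_distrib]
        refine (Fintype.prod_equiv a.right _ _ fun i => ?_)
        rw [hinv]
        by_cases h : bl i = j
        · rw [if_pos h, if_pos (by rw [ha1, h])]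
        · rw [if_neg h, if_neg (by rw [ha1]; exact h), inv_one]
      rw [this]
      exact H.inv_mem (ha2 j)


open scoped TensorProduct

section Block19

variable {n k : ℕ} {G : Type*} [CommGroup G] (c : Fin n → Fin k)

lemma blockSubgroupH_right_eq {H : Subgroup G} {ι : Type*} {bl : Fin n → ι}
    (w : ↥(blockSubgroupH H bl)) (i : Fin n) : bl (w.1.right i) = bl i := w.2.1 i

/-- The permutation of the block `c⁻¹(j)` induced by a block-preserving element. -/
def blockPerm (w : ↥(blockSubgroupH (⊤ : Subgroup G) c)) (j : Fin k) :
    Equiv.Perm {i : Fin n // c i = j} :=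
  w.1.right.subtypePerm (fun i => by rw [blockSubgroupH_right_eq w i])

/-- The representation `⊠_j Φ_{l_j}(π_j)` of the block subgroup `∏_j S_{λ_j}[G]`:
the external tensor product over the blocks `j` of the pullback of `π_j` along the
projection to the symmetric group of the block, twisted by the character `l_j`
applied to the entries in block `j`. -/
noncomputable def blockRep (l : Fin k → (G →* ℂˣ)) (V : Fin k → Type*)
    [∀ j, AddCommGroup (V j)] [∀ j, Module ℂ (V j)]
    (π : ∀ j, Representation ℂ (Equiv.Perm {i : Fin n // c i = j}) (V j)) :
    Representation ℂ ↥(blockSubgroupH (⊤ : Subgroup G) c) (⨂[ℂ] j, V j) where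
  toFun w := (∏ i, (l (c i) (w.1.left i) : ℂ)) •
    PiTensorProduct.map (fun j => π j (blockPerm c w j))
  map_one' := by
    have h1 : ∀ j, blockPerm c (1 : ↥(blockSubgroupH (⊤ : Subgroup G) c)) j = 1 :=
      fun j => Equiv.Perm.subtypePerm_one _ _
    simp only [h1]
    simp [PiTensorProduct.map_one]
  map_mul' w w' := by
    have hb : ∀ j, blockPerm c (w * w') j = blockPerm c w j * blockPerm c w' j := by
      intro j
      ext x
      rfl
    have hmap : PiTensorProduct.map (fun j => π j (blockPerm c (w * w') j))
        = (PiTensorProduct.map fun j => π j (blockPerm c w j)) ∘ₗ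
          (PiTensorProduct.map fun j => π j (blockPerm c w' j)) := by
      rw [← PiTensorProduct.map_comp]
      congr 1
      funext j
      rw [hb j, map_mul]
      rfl
    have hscal : (∏ i, (l (c i) ((w * w').1.left i) : ℂ))
        = (∏ i, (l (c i) (w.1.left i) : ℂ)) * ∏ i, (l (c i) (w'.1.left i) : ℂ) := by
      have : ∀ i, (w * w').1.left i = w.1.left i * w'.1.left (w.1.right.symm i) := by
        intro i; rfl
      simp only [this, map_mul, Units.val_mul, Finset.prod_mul_distrib]
      congr 1
      refine Fintype.prod_equiv w.1.right.symm _ _ fun i => ?_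
      have : c (w.1.right.symm i) = c i := by
        conv_rhs => rw [← w.1.right.apply_symm_apply i, blockSubgroupH_right_eq w]
      rw [this]
    rw [hmap, hscal, Module.End.mul_eq_comp, LinearMap.smul_comp, LinearMap.comp_smul,
      smul_smul]

end Block19

/-- The space of the representation induced from a representation `ρ` of a
subgroup `K` of `Γ`: functions `f : Γ → V` with `f (k * g) = ρ k (f g)`. -/
def IndV {Γ : Type*} [Group Γ] (K : Subgroup Γ) {V : Type*} [AddCommGroup V]
    [Module ℂ V] (ρ : Representation ℂ ↥K V) : Submodule ℂ (Γ → V) where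
  carrier := {f | ∀ (x : ↥K) (g : Γ), f (↑x * g) = ρ x (f g)}
  zero_mem' := by intro x g; simp
  add_mem' := by intro f f' hf hf' x g; simp [hf x g, hf' x g]
  smul_mem' := by intro a f hf x g; simp [hf x g]

/-- The representation of `Γ` induced from the representation `ρ` of the
subgroup `K`, with `Γ` acting by right translation. -/
def IndRep {Γ : Type*} [Group Γ] (K : Subgroup Γ) {V : Type*} [AddCommGroup V]
    [Module ℂ V] (ρ : Representation ℂ ↥K V) : Representation ℂ Γ ↥(IndV K ρ) where
  toFun g :=
    { toFun := fun f => ⟨fun x => f.1 (x * g), fun y x => by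
        simpa [mul_assoc] using f.2 y (x * g)⟩
      map_add' := fun f f' => by ext x; rfl
      map_smul' := fun a f => by ext x; rfl }
  map_one' := by ext f x; simp
  map_mul' g g' := by
    ext f x
    show f.1 (x * (g * g')) = f.1 (x * g * g')
    rw [mul_assoc]

/-- Transport of permutations along an equivalence, as a group homomorphism. -/
def permCongrHom {α β : Type*} (e : α ≃ β) : Equiv.Perm α →* Equiv.Perm β where
  toFun := e.permCongr
  map_one' := by ext x; simp
  map_mul' p q := by ext x; simp


/-- The image of `G_k(G,H) × G_l(G,H)` in `S_{k+l}[G]` under the block-diagonal embedding. -/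
def blockGnRange (k l : ℕ) (G : Type) [CommGroup G] (H : Subgroup G) :
    Subgroup (Wreath (Fin (k + l)) G) :=
  ((blockDiagHom G k l).comp
    (((GnSubgroup k G H).subtype).prodMap ((GnSubgroup l G H).subtype))).range

/-! Reduction mod `H` is surjective, and `G_k(G,H) × G_l(G,H)` is the full preimage of
`G_k(G/H,1) × G_l(G/H,1)` inside `G_{k+l}(G,H)`; a surjective homomorphism identifies the left
coset space of a preimage with that of the subgroup, normal or not. -/

section QuotientOfComap

variable {A B : Type*} [Group A] [Group B] {K : Subgroup A} {L : Subgroup B}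

lemma mk_map_eq_mk_map_iff_of_comap_eq (f : A →* B) (hK : K = L.comap f) (a b : A) :
    ((f a : B) : B ⧸ L) = f b ↔ (a : A ⧸ K) = b := by
  rw [QuotientGroup.eq, QuotientGroup.eq, hK, Subgroup.mem_comap, map_mul, map_inv]

noncomputable def quotientEquivOfComapEq (f : A →* B) (hf : Function.Surjective f)
    (hK : K = L.comap f) : A ⧸ K ≃ B ⧸ L :=
  Equiv.ofBijective
    (Quotient.map' f fun a b h =>
      Quotient.exact ((mk_map_eq_mk_map_iff_of_comap_eq f hK a b).2 (Quotient.sound h)))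
    ⟨fun x y => Quotient.inductionOn₂' x y fun a b h =>
        (mk_map_eq_mk_map_iff_of_comap_eq f hK a b).1 h,
      fun y => Quotient.inductionOn' y fun b =>
        (hf b).elim fun a ha => ⟨(a : A ⧸ K), congrArg _ ha⟩⟩

lemma quotientEquivOfComapEq_mk (f : A →* B) (hf : Function.Surjective f)
    (hK : K = L.comap f) (a : A) :
    quotientEquivOfComapEq f hf hK (a : A ⧸ K) = (f a : B ⧸ L) :=
  rfl

end QuotientOfComap

section BlockDiag

variable {G : Type*} [Group G] {k l : ℕ}

@[simp] lemma blockDiagFun_left_castAdd (a : Wreath (Fin k) G) (b : Wreath (Fin l) G)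
    (x : Fin k) : (blockDiagFun a b).left (Fin.castAdd l x) = a.left x := by
  simp [blockDiagFun]

@[simp] lemma blockDiagFun_left_natAdd (a : Wreath (Fin k) G) (b : Wreath (Fin l) G)
    (x : Fin l) : (blockDiagFun a b).left (Fin.natAdd k x) = b.left x := by
  simp [blockDiagFun]

lemma blockDiagFun_right (a : Wreath (Fin k) G) (b : Wreath (Fin l) G) :
    (blockDiagFun a b).right = finSumFinEquiv.permCongr (a.right.sumCongr b.right) :=
  rfl

lemma eq_blockDiagFun_of_right_eq (w : Wreath (Fin (k + l)) G) (σ : Equiv.Perm (Fin k))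
    (τ : Equiv.Perm (Fin l)) (h : w.right = finSumFinEquiv.permCongr (σ.sumCongr τ)) :
    w = blockDiagFun ⟨fun x => w.left (Fin.castAdd l x), σ⟩
      ⟨fun x => w.left (Fin.natAdd k x), τ⟩ := by
  refine SemidirectProduct.ext (funext fun i => ?_) h
  induction i using Fin.addCases <;> simp

end BlockDiag

lemma mem_blockGnRange_iff {k l : ℕ} {G : Type} [CommGroup G] {H : Subgroup G}
    (w : Wreath (Fin (k + l)) G) :
    w ∈ blockGnRange k l G H ↔
      ∃ a ∈ GnSubgroup k G H, ∃ b ∈ GnSubgroup l G H, blockDiagFun a b = w := by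
  simp [blockGnRange, blockDiagHom]

section Reduce

variable {G : Type*} [CommGroup G] {H : Subgroup G}

@[simp] lemma reduceW_left {n : ℕ} (w : Wreath (Fin n) G) (i : Fin n) :
    (reduceW n G H w).left i = (w.left i : G ⧸ H) :=
  rfl

@[simp] lemma reduceW_right {n : ℕ} (w : Wreath (Fin n) G) :
    (reduceW n G H w).right = w.right :=
  rfl

lemma reduceW_surjective (n : ℕ) : Function.Surjective (reduceW n G H) := fun v => by
  choose g hg using fun i => QuotientGroup.mk_surjective (v.left i)
  exact ⟨⟨g, v.right⟩, SemidirectProduct.ext (funext hg) rfl⟩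

lemma reduceW_mem_GnSubgroup_bot_iff {n : ℕ} (w : Wreath (Fin n) G) :
    reduceW n G H w ∈ GnSubgroup n (G ⧸ H) ⊥ ↔ w ∈ GnSubgroup n G H := by
  simp only [mem_GnSubgroup, reduceW_left, ← QuotientGroup.mk_prod, Subgroup.mem_bot,
    QuotientGroup.eq_one_iff]

lemma phiGn_surjective (n : ℕ) : Function.Surjective (phiGn n G H) := fun v => by
  obtain ⟨w, hw⟩ := reduceW_surjective (H := H) n v.1
  exact ⟨⟨w, (reduceW_mem_GnSubgroup_bot_iff w).1 (hw ▸ v.2)⟩, Subtype.ext hw⟩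

lemma reduceW_blockDiagFun {k l : ℕ} (a : Wreath (Fin k) G) (b : Wreath (Fin l) G) :
    reduceW (k + l) G H (blockDiagFun a b) =
      blockDiagFun (reduceW k G H a) (reduceW l G H b) := by
  refine SemidirectProduct.ext (funext fun i => ?_) rfl
  induction i using Fin.addCases <;> simp

end Reduce

/-- Reduction mod `H` keeps the permutation part, so it detects the block shape; the entries of
a block then multiply into `H` exactly when their reductions multiply to `1`. -/
lemma reduceW_mem_blockGnRange_iff {k l : ℕ} {G : Type} [CommGroup G] {H : Subgroup G}
    (w : Wreath (Fin (k + l)) G) :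
    reduceW (k + l) G H w ∈ blockGnRange k l (G ⧸ H) ⊥ ↔ w ∈ blockGnRange k l G H := by
  simp only [mem_blockGnRange_iff]
  constructor
  · rintro ⟨a', ha', b', hb', hw⟩
    have hright : w.right = finSumFinEquiv.permCongr (a'.right.sumCongr b'.right) := by
      rw [← reduceW_right (H := H), ← hw, blockDiagFun_right]
    refine ⟨_, ?_, _, ?_, (eq_blockDiagFun_of_right_eq w _ _ hright).symm⟩
    · rw [← reduceW_mem_GnSubgroup_bot_iff (H := H)]
      convert ha'
      refine SemidirectProduct.ext (funext fun x => ?_) rfl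
      simpa using (congrArg (·.left (Fin.castAdd l x)) hw).symm
    · rw [← reduceW_mem_GnSubgroup_bot_iff (H := H)]
      convert hb'
      refine SemidirectProduct.ext (funext fun x => ?_) rfl
      simpa using (congrArg (·.left (Fin.natAdd k x)) hw).symm
  · rintro ⟨a, ha, b, hb, rfl⟩
    exact ⟨_, (reduceW_mem_GnSubgroup_bot_iff a).2 ha, _, (reduceW_mem_GnSubgroup_bot_iff b).2 hb,
      (reduceW_blockDiagFun a b).symm⟩

lemma blockGnRange_subgroupOf_eq_comap_phiGn (k l : ℕ) (G : Type) [CommGroup G]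
    (H : Subgroup G) :
    (blockGnRange k l G H).subgroupOf (GnSubgroup (k + l) G H) =
      ((blockGnRange k l (G ⧸ H) ⊥).subgroupOf (GnSubgroup (k + l) (G ⧸ H) ⊥)).comap
        (phiGn (k + l) G H) := by
  ext w
  exact (reduceW_mem_blockGnRange_iff w.1).symm

theorem statement7_general (k l : ℕ) (G : Type) [CommGroup G] (H : Subgroup G) :
    ∃ e : (↥(GnSubgroup (k + l) G H) ⧸
            (blockGnRange k l G H).subgroupOf (GnSubgroup (k + l) G H)) ≃
          (↥(GnSubgroup (k + l) (G ⧸ H) ⊥) ⧸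
            (blockGnRange k l (G ⧸ H) ⊥).subgroupOf (GnSubgroup (k + l) (G ⧸ H) ⊥)),
      ∀ w : ↥(GnSubgroup (k + l) G H),
        e (QuotientGroup.mk w) = QuotientGroup.mk (phiGn (k + l) G H w) :=
  ⟨quotientEquivOfComapEq _ (phiGn_surjective _) (blockGnRange_subgroupOf_eq_comap_phiGn k l G H),
    quotientEquivOfComapEq_mk _ _ _⟩

/-- reduction mod `H` induces a bijection of coset spaces
`G_{k+l}(G,H)/(G_k(G,H) × G_l(G,H)) ≃ G_{k+l}(G/H,1)/(G_k(G/H,1) × G_l(G/H,1))`. -/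
theorem statement7 (k l : ℕ) (G : Type) [CommGroup G] [Finite G] (H : Subgroup G) :
    ∃ e : (↥(GnSubgroup (k + l) G H) ⧸
            (blockGnRange k l G H).subgroupOf (GnSubgroup (k + l) G H)) ≃
          (↥(GnSubgroup (k + l) (G ⧸ H) ⊥) ⧸
            (blockGnRange k l (G ⧸ H) ⊥).subgroupOf (GnSubgroup (k + l) (G ⧸ H) ⊥)),
      ∀ w : ↥(GnSubgroup (k + l) G H),
        e (QuotientGroup.mk w) = QuotientGroup.mk (phiGn (k + l) G H w) :=
  statement7_general k l G H
end

section
/- Let λ = (λ_l)_{l∈H*} be a tuple of nonnegative integers summing to n, and G_λ = ∏_l G_{λ_l}(G,H) embedded block-diagonally in G_n = G_n(G,H). Then the number of double cosets in G_λ\G_n/G_λ that contain a diagonal representative (an element of G^n with trivial permutation part, entry product in H) equals [G:H]^{ℓ(λ)−1}, where ℓ(λ) is the number of nonzero parts of λ. -/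
/-!
For a diagonal `d ∈ G_n(G,H)` record, for every nonempty block `j`, the class in `G ⧸ H` of
the product of the entries of `d` in block `j`. Left or right multiplication by an element of
`G_λ` preserves these classes, since such an element permutes each block and has block products
in `H`; conversely, if two diagonal elements `d, d'` have the same classes, then
`d' d⁻¹ ∈ G_λ`. So diagonal double cosets correspond to tuples in `G ⧸ H`, indexed by the
nonempty blocks, whose product is trivial (it is the entry product of `d` modulo `H`), and every
such tuple occurs. One entry of such a tuple is determined by the others, which gives
`[G:H]^{ℓ(λ)-1}`.
-/

open SemidirectProduct

open scoped TensorProduct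

section BlockProduct

variable {n : ℕ} {G : Type*} [CommGroup G] {ι : Type*}

open scoped Classical in
noncomputable def blockProd (bl : Fin n → ι) : (Fin n → G) →* (ι → G) where
  toFun f j := ∏ i, if bl i = j then f i else 1
  map_one' := by ext j; simp
  map_mul' f g := by
    ext j
    simp only [Pi.mul_apply, ← Finset.prod_mul_distrib]
    refine Finset.prod_congr rfl fun i _ => ?_
    split_ifs <;> simp

open scoped Classical in
lemma blockProd_apply (bl : Fin n → ι) (f : Fin n → G) (j : ι) :
    blockProd bl f j = ∏ i, if bl i = j then f i else 1 := rfl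

lemma blockProd_comp_perm {bl : Fin n → ι} {σ : Equiv.Perm (Fin n)}
    (hσ : ∀ i, bl (σ i) = bl i) (f : Fin n → G) :
    blockProd bl (f ∘ σ) = blockProd bl f := by
  ext j
  simp only [blockProd_apply]
  exact Fintype.prod_equiv σ _ _ fun i => by rw [hσ, Function.comp_apply]

lemma blockProd_mul_left {bl : Fin n → ι} {a : Wreath (Fin n) G}
    (ha : ∀ i, bl (a.right i) = bl i) (b : Wreath (Fin n) G) :
    blockProd bl (a * b).left = blockProd bl a.left * blockProd bl b.left := by
  have hsymm : ∀ i, bl (a.right.symm i) = bl i := fun i => by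
    conv_rhs => rw [← a.right.apply_symm_apply i, ha]
  have hleft : (a * b).left = a.left * (b.left ∘ a.right.symm) := rfl
  rw [hleft, map_mul, blockProd_comp_perm hsymm]

lemma blockProd_eq_one_of_notMem_range {bl : Fin n → ι} {j : ι} (hj : j ∉ Set.range bl)
    (f : Fin n → G) : blockProd bl f j = 1 := by
  classical
  rw [blockProd_apply]
  exact Finset.prod_eq_one fun i _ => if_neg fun h => hj ⟨i, h⟩

open scoped Classical in
lemma prod_blockProd (bl : Fin n → ι) (f : Fin n → G) :
    ∏ j : Set.range bl, blockProd bl f j = ∏ i, f i := by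
  rw [← Finset.prod_fiberwise_of_maps_to (t := Finset.univ)
    (g := Set.rangeFactorization bl) (fun i _ => Finset.mem_univ _)]
  refine Finset.prod_congr rfl fun j _ => ?_
  rw [blockProd_apply, Finset.prod_filter]
  simp only [Subtype.ext_iff, Set.rangeFactorization_coe]

open scoped Classical in
lemma exists_blockProd_eq (bl : Fin n → ι) (u : Set.range bl → G) :
    ∃ f : Fin n → G, ∀ j : Set.range bl, blockProd bl f j = u j := by
  set s := Set.rangeSplitting bl
  refine ⟨Function.extend s u 1, fun j => ?_⟩
  rw [blockProd_apply, Finset.prod_eq_single (s j)]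
  · rw [if_pos (Set.apply_rangeSplitting bl j), (Set.rangeSplitting_injective bl).extend_apply]
  · intro i _ hi
    refine ite_eq_right_iff.2 fun hij => Function.extend_apply' _ _ _ ?_
    rintro ⟨j', rfl⟩
    have : j' = j := Subtype.ext ((Set.apply_rangeSplitting bl j').symm.trans hij)
    exact hi (congrArg s this)
  · exact fun h => absurd (Finset.mem_univ _) h

end BlockProduct

lemma Nat.card_image_eq_of_eq_iff_eq {α β γ : Type*} {f : α → β} {g : α → γ} {s : Set α}
    (h : ∀ x ∈ s, ∀ y ∈ s, f x = f y ↔ g x = g y) :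
    Nat.card (f '' s) = Nat.card (g '' s) := by
  have hker : Setoid.ker (s.domRestrict f) = Setoid.ker (s.domRestrict g) :=
    Setoid.ext fun x y => h x x.2 y y.2
  rw [← Set.range_domRestrict, ← Set.range_domRestrict,
    ← Nat.card_congr (Setoid.quotientKerEquivRange _), hker,
    Nat.card_congr (Setoid.quotientKerEquivRange _)]

lemma Nat.card_subtype_prod_eq_one (ι A : Type*) [Fintype ι] [CommGroup A] :
    Nat.card {v : ι → A // ∏ j, v j = 1} = Nat.card A ^ (Nat.card ι - 1) := by
  classical
  rcases isEmpty_or_nonempty ι with hι | ⟨⟨j₀⟩⟩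
  · simp
  have hsplit (v : ι → A) : ∏ j, v j = v j₀ * ∏ j : {j // j ≠ j₀}, v j.1 := by
    rw [Fintype.prod_eq_mul_prod_compl j₀]
    congr 1
    exact Finset.prod_subtype _ (fun j => by simp) _
  let e : {v : ι → A // ∏ j, v j = 1} ≃ ({j // j ≠ j₀} → A) :=
    { toFun := fun v j => v.1 j.1
      invFun := fun u => ⟨fun j => if h : j = j₀ then (∏ j', u j')⁻¹ else u ⟨j, h⟩, by
        rw [hsplit, dif_pos rfl, inv_mul_eq_one]
        exact Finset.prod_congr rfl fun j _ => by rw [dif_neg j.2]⟩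
      left_inv := fun v => by
        ext j
        by_cases h : j = j₀
        · subst h
          dsimp only
          rw [dif_pos rfl, inv_eq_iff_mul_eq_one, mul_comm, ← hsplit, v.2]
        · exact dif_neg h
      right_inv := fun u => funext fun j => dif_neg j.2 }
  rw [Nat.card_congr e, Nat.card_fun, Nat.card_eq_fintype_card (α := {j // j ≠ j₀}),
    Fintype.card_subtype_compl, Fintype.card_subtype_eq, Nat.card_eq_fintype_card (α := ι)]

section BlockClass

variable {n : ℕ} {G : Type*} [CommGroup G] (H : Subgroup G) {ι : Type*} (bl : Fin n → ι)

noncomputable def blockClass (w : Wreath (Fin n) G) : Set.range bl → G ⧸ H :=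
  fun j => ((blockProd bl w.left j : G) : G ⧸ H)

variable {H bl}

lemma blockClass_mul {a : Wreath (Fin n) G} (ha : ∀ i, bl (a.right i) = bl i)
    (w : Wreath (Fin n) G) : blockClass H bl (a * w) = blockClass H bl a * blockClass H bl w := by
  funext j
  simp only [blockClass, blockProd_mul_left ha, Pi.mul_apply, QuotientGroup.mk_mul]

lemma mem_blockSubgroupH_iff_blockClass_eq_one {a : Wreath (Fin n) G}
    (ha : ∀ i, bl (a.right i) = bl i) : a ∈ blockSubgroupH H bl ↔ blockClass H bl a = 1 := by
  classical
  refine ⟨fun h => funext fun j => (QuotientGroup.eq_one_iff _).2 (h.2 j),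
    fun h => ⟨ha, fun j => ?_⟩⟩
  change blockProd bl a.left j ∈ H
  by_cases hj : j ∈ Set.range bl
  · exact (QuotientGroup.eq_one_iff _).1 (congrFun h ⟨j, hj⟩)
  · rw [blockProd_eq_one_of_notMem_range hj]
    exact H.one_mem

lemma doubleCoset_mk_eq_iff_blockClass_eq {d d' : GnSubgroup n G H} (hd : d.1.right = 1)
    (hd' : d'.1.right = 1) :
    DoubleCoset.mk ((blockSubgroupH H bl).subgroupOf (GnSubgroup n G H))
        ((blockSubgroupH H bl).subgroupOf (GnSubgroup n G H)) d =
      DoubleCoset.mk ((blockSubgroupH H bl).subgroupOf (GnSubgroup n G H))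
        ((blockSubgroupH H bl).subgroupOf (GnSubgroup n G H)) d' ↔
    blockClass H bl d.1 = blockClass H bl d'.1 := by
  rw [DoubleCoset.eq]
  constructor
  · rintro ⟨a, ha, b, hb, rfl⟩
    rw [Subgroup.mem_subgroupOf] at ha hb
    have had : ∀ i, bl ((a.1 * d.1).right i) = bl i := fun i => by
      simpa [hd] using ha.1 i
    rw [Subgroup.coe_mul, Subgroup.coe_mul, blockClass_mul had, blockClass_mul ha.1,
      (mem_blockSubgroupH_iff_blockClass_eq_one ha.1).1 ha,
      (mem_blockSubgroupH_iff_blockClass_eq_one hb.1).1 hb, one_mul, mul_one]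
  · intro h
    refine ⟨d' * d⁻¹, ?_, 1, one_mem _, by group⟩
    have hright : (d'.1 * d.1⁻¹).right = 1 := by simp [hd, hd']
    have hpres : ∀ i, bl ((d'.1 * d.1⁻¹).right i) = bl i := fun i => by rw [hright]; rfl
    rw [Subgroup.mem_subgroupOf, Subgroup.coe_mul, Subgroup.coe_inv,
      mem_blockSubgroupH_iff_blockClass_eq_one hpres]
    have hmul := blockClass_mul (H := H) hpres d.1
    rw [inv_mul_cancel_right, ← h] at hmul
    exact mul_eq_right.1 hmul.symm

open scoped Classical in
lemma image_blockClass_diagonal :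
    (fun d : GnSubgroup n G H => blockClass H bl d.1) '' {d | d.1.right = 1} =
      {v : Set.range bl → G ⧸ H | ∏ j, v j = 1} := by
  ext v
  constructor
  · rintro ⟨d, -, rfl⟩
    change ∏ j : Set.range bl, ((blockProd bl d.1.left j : G) : G ⧸ H) = 1
    rw [← QuotientGroup.mk_prod, prod_blockProd, QuotientGroup.eq_one_iff]
    exact d.2
  · intro hv
    obtain ⟨f, hf⟩ := exists_blockProd_eq bl fun j => (v j).out
    have hf' : ∀ j : Set.range bl, ((blockProd bl f j : G) : G ⧸ H) = v j := fun j => by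
      rw [hf, QuotientGroup.out_eq']
    have hmem : (⟨f, 1⟩ : Wreath (Fin n) G) ∈ GnSubgroup n G H := by
      rw [mem_GnSubgroup, ← QuotientGroup.eq_one_iff, ← prod_blockProd bl f,
        QuotientGroup.mk_prod, ← hv]
      exact Finset.prod_congr rfl fun j _ => hf' j
    exact ⟨⟨_, hmem⟩, rfl, funext hf'⟩

end BlockClass

theorem statement18_general (n : ℕ) (G : Type) [CommGroup G]
    (H : Subgroup G) (bl : Fin n → (↥H →* ℂˣ)) :
    Nat.card {q : DoubleCoset.Quotient
        (((blockSubgroupH H bl).subgroupOf (GnSubgroup n G H)) : Set ↥(GnSubgroup n G H))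
        (((blockSubgroupH H bl).subgroupOf (GnSubgroup n G H)) : Set ↥(GnSubgroup n G H)) //
      ∃ d : ↥(GnSubgroup n G H), (d : Wreath (Fin n) G).right = 1 ∧
        DoubleCoset.mk ((blockSubgroupH H bl).subgroupOf (GnSubgroup n G H))
          ((blockSubgroupH H bl).subgroupOf (GnSubgroup n G H)) d = q}
      = H.index ^ (Nat.card (Set.range bl) - 1) := by
  classical
  set K := (blockSubgroupH H bl).subgroupOf (GnSubgroup n G H)
  calc _ = Nat.card (DoubleCoset.mk K K '' {d | d.1.right = 1}) := rfl
    _ = Nat.card ((fun d : GnSubgroup n G H => blockClass H bl d.1) '' {d | d.1.right = 1}) :=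
      Nat.card_image_eq_of_eq_iff_eq fun d hd d' hd' =>
        doubleCoset_mk_eq_iff_blockClass_eq hd hd'
    _ = Nat.card {v : Set.range bl → G ⧸ H // ∏ j, v j = 1} := by
      rw [image_blockClass_diagonal]; rfl
    _ = H.index ^ (Nat.card (Set.range bl) - 1) := Nat.card_subtype_prod_eq_one _ _

/-- the number of double cosets in `G_λ\G_n(G,H)/G_λ` containing a
diagonal representative equals `[G:H]^{ℓ(λ)-1}`, where the blocks of
`G_λ = ∏_j G_{λ_j}(G,H)` are the fibers of `bl` and `ℓ(λ)` is the number of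
(nonzero) blocks. -/
theorem statement18 (n : ℕ) (hn : 0 < n) (G : Type) [CommGroup G] [Finite G]
    (H : Subgroup G) (bl : Fin n → (↥H →* ℂˣ)) :
    Nat.card {q : DoubleCoset.Quotient
        (((blockSubgroupH H bl).subgroupOf (GnSubgroup n G H)) : Set ↥(GnSubgroup n G H))
        (((blockSubgroupH H bl).subgroupOf (GnSubgroup n G H)) : Set ↥(GnSubgroup n G H)) //
      ∃ d : ↥(GnSubgroup n G H), (d : Wreath (Fin n) G).right = 1 ∧
        DoubleCoset.mk ((blockSubgroupH H bl).subgroupOf (GnSubgroup n G H))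
          ((blockSubgroupH H bl).subgroupOf (GnSubgroup n G H)) d = q}
      = H.index ^ (Nat.card (Set.range bl) - 1) :=
  statement18_general n G H bl
end
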